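/- arXiv:1312.2268 — 3 statements merged into one kernel-verified Lean document; each statement's English description precedes it below -/
import Mathlib

section
/- For every even positive integer n and k = n/2, the relation ≡_{PAL,n,k} on binary strings of length k has exactly 2^k equivalence classes; in particular, no two distinct strings x, y of length k satisfy x ≡_{PAL,n,k} y. -/
/-- `PAL`: the language of even-length palindromes over the alphabet `{a,b}` (modeled as `Bool`). -/
def PAL (w : List Bool) : Prop := Even w.length ∧ w.reverse = w

/-- For every even positive `n` and `k = n/2`, the relation `≡_{PAL,n,k}` on binary strings of
length `k` has exactly `2^k` equivalence classes; in particular no two distinct strings `x, y`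
of length `k` are related. -/
theorem pal_equiv_classes (n k : ℕ) (hn : 0 < n) (hev : Even n) (hk : k = n / 2) :
    (∀ x y : List Bool, x.length = k → y.length = k →
      (∀ z : List Bool, z.length = n - k → (PAL (x ++ z) ↔ PAL (y ++ z))) → x = y) ∧
    Nat.card (Quot (fun x y : {w : List Bool // w.length = k} =>
      ∀ z : List Bool, z.length = n - k → (PAL (x.1 ++ z) ↔ PAL (y.1 ++ z)))) = 2 ^ k := by
  obtain ⟨m, hm⟩ := hev
  have hkm : k = m := by omega
  have hnk : n - k = k := by omega
  have key : ∀ x y : List Bool, x.length = k → y.length = k →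
      (∀ z : List Bool, z.length = n - k → (PAL (x ++ z) ↔ PAL (y ++ z))) → x = y := by
    intro x y hx hy h
    have hz := h x.reverse (by simp [hx, hnk])
    have hp : PAL (x ++ x.reverse) := by
      constructor
      · simp [hx]
      · simp
    have hq : PAL (y ++ x.reverse) := (hz).mp hp
    have := hq.2
    rw [List.reverse_append, List.reverse_reverse] at this
    have := List.append_inj this (by simp [hx, hy])
    exact this.1
  refine ⟨key, ?_⟩
  set r := fun x y : {w : List Bool // w.length = k} =>
      ∀ z : List Bool, z.length = n - k → (PAL (x.1 ++ z) ↔ PAL (y.1 ++ z)) with hr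
  have hre : ∀ x y, r x y → x = y := by
    intro x y h
    exact Subtype.ext (key x.1 y.1 x.2 y.2 h)
  have e : Quot r ≃ {w : List Bool // w.length = k} :=
    { toFun := Quot.lift id hre
      invFun := Quot.mk r
      left_inv := by
        intro q
        induction q using Quot.ind with
        | _ x => rfl
      right_inv := fun x => rfl }
  rw [Nat.card_congr e]
  have e2 : {w : List Bool // w.length = k} ≃ (Fin k → Bool) :=
    (Equiv.refl _).trans ((Equiv.vectorEquivFin Bool k))
  rw [Nat.card_congr e2]
  simp [Nat.card_eq_fintype_card]
end

section
/- For n = 3k (k a positive integer), the set S of strings of length k over {a,b,c} of the form a^i b^j c^m (with i+j+m = k) has binomial(k+2, 2) elements, and no two distinct members x, y of S satisfy x ≡_{EQUAL3,n,k} y. -/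
/-!
Each word aⁱbʲcᵐ with i + j + m = k is determined by its letter counts, and these words correspond
to the compositions of k into three parts, counted by stars and bars. Two of them are separated by
the suffix a^(j+m) b^(i+m) c^(i+j), of length 2k, which balances aⁱbʲcᵐ and no other word of the
same length.
-/

/-- `EQUAL3`: strings over `{a,b,c}` (modeled as `Fin 3`, with `a = 0`, `b = 1`, `c = 2`)
with equally many occurrences of each symbol. -/
def EQUAL3 (w : List (Fin 3)) : Prop :=
  w.count (0 : Fin 3) = w.count (1 : Fin 3) ∧ w.count (1 : Fin 3) = w.count (2 : Fin 3)

open Finset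

def blockWord (i j m : ℕ) : List (Fin 3) :=
  List.replicate i 0 ++ List.replicate j 1 ++ List.replicate m 2

section blockWord

variable {i j m i' j' m' : ℕ}

@[simp]
theorem length_blockWord : (blockWord i j m).length = i + j + m := by
  simp [blockWord, Nat.add_assoc]

@[simp]
theorem count_zero_blockWord : (blockWord i j m).count 0 = i := by
  simp [blockWord, List.count_replicate]

@[simp]
theorem count_one_blockWord : (blockWord i j m).count 1 = j := by
  simp [blockWord, List.count_replicate]

@[simp]
theorem count_two_blockWord : (blockWord i j m).count 2 = m := by
  simp [blockWord, List.count_replicate]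

theorem blockWord_inj : blockWord i j m = blockWord i' j' m' ↔ i = i' ∧ j = j' ∧ m = m' := by
  refine ⟨fun h => ⟨?_, ?_, ?_⟩, by rintro ⟨rfl, rfl, rfl⟩; rfl⟩
  · simpa using congrArg (List.count 0) h
  · simpa using congrArg (List.count 1) h
  · simpa using congrArg (List.count 2) h

theorem equal3_blockWord_append_blockWord_iff :
    EQUAL3 (blockWord i j m ++ blockWord i' j' m') ↔ i + i' = j + j' ∧ j + j' = m + m' := by
  simp [EQUAL3, List.count_append]

theorem equal3_blockWord_append_complement :
    EQUAL3 (blockWord i j m ++ blockWord (j + m) (i + m) (i + j)) := by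
  rw [equal3_blockWord_append_blockWord_iff]
  omega

theorem eq_of_equal3_blockWord_append_complement
    (h : EQUAL3 (blockWord i' j' m' ++ blockWord (j + m) (i + m) (i + j)))
    (hsum : i' + j' + m' = i + j + m) : i' = i ∧ j' = j ∧ m' = m := by
  rw [equal3_blockWord_append_blockWord_iff] at h
  omega

end blockWord

theorem ncard_setOf_blockWord (k : ℕ) :
    {w | ∃ i j m : ℕ, i + j + m = k ∧ w = blockWord i j m}.ncard = (k + 2).choose 2 := by
  classical
  let toWord (f : Fin 3 →₀ ℕ) : List (Fin 3) := blockWord (f 0) (f 1) (f 2)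
  have hset : {w | ∃ i j m : ℕ, i + j + m = k ∧ w = blockWord i j m} =
      toWord '' (univ.finsuppAntidiag k : Finset (Fin 3 →₀ ℕ)) := by
    ext w
    simp only [Set.mem_ofPred_eq, Set.mem_image, mem_coe, mem_finsuppAntidiag, Fin.sum_univ_three,
      subset_univ, and_true, toWord]
    constructor
    · rintro ⟨i, j, m, hk, rfl⟩
      exact ⟨Finsupp.equivFunOnFinite.symm ![i, j, m], by simpa using hk, by simp⟩
    · rintro ⟨f, hk, rfl⟩
      exact ⟨f 0, f 1, f 2, hk, rfl⟩
  have hinj : Function.Injective toWord := fun f g h => by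
    obtain ⟨h0, h1, h2⟩ := blockWord_inj.1 h
    ext a
    fin_cases a <;> assumption
  rw [hset, Set.ncard_image_of_injective _ hinj, Set.ncard_coe_finset,
    card_finsuppAntidiag_nat_eq_choose, card_univ, Fintype.card_fin,
    show 3 + k - 1 = k + 2 by omega, ← Nat.choose_symm_add]

theorem equal3_prefixes_general (k n : ℕ) (hn : n = 3 * k) :
    ({w : List (Fin 3) | ∃ i j m : ℕ, i + j + m = k ∧
        w = List.replicate i (0 : Fin 3) ++ List.replicate j (1 : Fin 3) ++
            List.replicate m (2 : Fin 3)}.ncard = (k + 2).choose 2) ∧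
    (∀ x y : List (Fin 3),
      (∃ i j m : ℕ, i + j + m = k ∧
        x = List.replicate i (0 : Fin 3) ++ List.replicate j (1 : Fin 3) ++
            List.replicate m (2 : Fin 3)) →
      (∃ i j m : ℕ, i + j + m = k ∧
        y = List.replicate i (0 : Fin 3) ++ List.replicate j (1 : Fin 3) ++
            List.replicate m (2 : Fin 3)) →
      (∀ z : List (Fin 3), z.length = n - k → (EQUAL3 (x ++ z) ↔ EQUAL3 (y ++ z))) →
      x = y) := by
  refine ⟨ncard_setOf_blockWord k, ?_⟩
  rintro x y ⟨i, j, m, hx, rfl⟩ ⟨i', j', m', hy, rfl⟩ hequiv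
  have hz := hequiv (blockWord (j + m) (i + m) (i + j)) (by rw [length_blockWord]; omega)
  obtain ⟨rfl, rfl, rfl⟩ :=
    eq_of_equal3_blockWord_append_complement (hz.1 equal3_blockWord_append_complement) (by omega)
  rfl

/-- For `n = 3k` (`k` positive), the set `S` of strings of length `k` over `{a,b,c}` of the
form `a^i b^j c^m` (with `i+j+m = k`) has `binomial(k+2,2)` elements, and no two distinct
members of `S` are `≡_{EQUAL3,n,k}`-equivalent. -/
theorem equal3_prefixes (k n : ℕ) (hk : 0 < k) (hn : n = 3 * k) :
    ({w : List (Fin 3) | ∃ i j m : ℕ, i + j + m = k ∧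
        w = List.replicate i (0 : Fin 3) ++ List.replicate j (1 : Fin 3) ++
            List.replicate m (2 : Fin 3)}.ncard = (k + 2).choose 2) ∧
    (∀ x y : List (Fin 3),
      (∃ i j m : ℕ, i + j + m = k ∧
        x = List.replicate i (0 : Fin 3) ++ List.replicate j (1 : Fin 3) ++
            List.replicate m (2 : Fin 3)) →
      (∃ i j m : ℕ, i + j + m = k ∧
        y = List.replicate i (0 : Fin 3) ++ List.replicate j (1 : Fin 3) ++
            List.replicate m (2 : Fin 3)) →
      (∀ z : List (Fin 3), z.length = n - k → (EQUAL3 (x ++ z) ↔ EQUAL3 (y ++ z))) →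
      x = y) :=
  equal3_prefixes_general k n hn
end

section
/- Combining the configuration-counting bound with the prefix-distinguishing property of PAL: if a one-way device with |Q| states and advice length A(n) recognizes PAL on inputs of length n (n even), then |Q|·(A(n)+1) ≥ 2^{n/2}. Hence no such device with polynomially bounded A(n) recognizes PAL for all n. -/
lemma exists_poly_lt_two_pow (K d : ℕ) : ∃ m : ℕ, K * m ^ d + K < 2 ^ m := by
  have h := isLittleO_pow_const_const_pow_of_one_lt (R := ℝ) d (by norm_num : (1:ℝ) < 2)
  have hε : (0:ℝ) < 1 / (2 * (K + 1)) := by positivity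
  have hb := h.def hε
  rw [Filter.eventually_atTop] at hb
  obtain ⟨N, hN⟩ := hb
  refine ⟨max N 1, ?_⟩
  set m := max N 1 with hmdef
  have h2 := hN m (le_max_left _ _)
  have hm : (1:ℝ) ≤ (m:ℝ) := by
    have : 1 ≤ m := le_max_right _ _
    exact_mod_cast this
  rw [Real.norm_of_nonneg (by positivity), Real.norm_of_nonneg (by positivity)] at h2
  have hmd : (1:ℝ) ≤ (m:ℝ) ^ d := by
    calc (1:ℝ) = 1 ^ d := (one_pow d).symm
    _ ≤ (m:ℝ) ^ d := pow_le_pow_left₀ (by norm_num) hm d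
  have goalR : (K:ℝ) * (m:ℝ) ^ d + K < 2 ^ m := by
    have hpos : (0:ℝ) < 2 ^ m := by positivity
    have h3 := mul_le_mul_of_nonneg_left h2 (by positivity : (0:ℝ) ≤ 2 * (K + 1))
    have h4 : (2 * ((K:ℝ) + 1)) * (1 / (2 * (K + 1)) * 2 ^ m) = 2 ^ m := by
      field_simp
    rw [h4] at h3
    nlinarith [h3, hmd, mul_nonneg (Nat.cast_nonneg K : (0:ℝ) ≤ K) (sub_nonneg.2 hmd)]
  have : (K * m ^ d + K : ℕ) < 2 ^ m := by exact_mod_cast goalR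
  exact this

/-- If a one-way device with state set `Q` and advice length `A` (configurations in
`Q × {0,…,A}` determine acceptance together with the remaining suffix) recognizes `PAL` on
inputs of even length `n`, then `|Q|·(A+1) ≥ 2^{n/2}`; hence no such device with polynomially
bounded advice length `A(n)` recognizes `PAL` for all (even) input lengths. -/
theorem pal_requires_exponential_advice :
    (∀ (Q : Type) [Fintype Q] (n A : ℕ), Even n →
      ∀ (c : List Bool → Q × Fin (A + 1)) (accept : List Bool → Bool),
        (∀ x y z : List Bool, c x = c y → accept (x ++ z) = accept (y ++ z)) →
        (∀ w : List Bool, w.length = n → (accept w = true ↔ PAL w)) →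
        2 ^ (n / 2) ≤ Fintype.card Q * (A + 1)) ∧
    (∀ A : ℕ → ℕ, (∃ C d : ℕ, ∀ n, A n ≤ C * n ^ d) →
      ¬ ∃ (Q : Type) (_ : Fintype Q) (c : (n : ℕ) → List Bool → Q × Fin (A n + 1))
          (accept : ℕ → List Bool → Bool),
        (∀ n, ∀ x y z : List Bool, c n x = c n y →
            accept n (x ++ z) = accept n (y ++ z)) ∧
        (∀ n, Even n → ∀ w : List Bool, w.length = n → (accept n w = true ↔ PAL w))) := by
  have part1 : ∀ (Q : Type) [Fintype Q] (n A : ℕ), Even n →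
      ∀ (c : List Bool → Q × Fin (A + 1)) (accept : List Bool → Bool),
        (∀ x y z : List Bool, c x = c y → accept (x ++ z) = accept (y ++ z)) →
        (∀ w : List Bool, w.length = n → (accept w = true ↔ PAL w)) →
        2 ^ (n / 2) ≤ Fintype.card Q * (A + 1) := by
    intro Q _ n A hn c accept hc hacc
    obtain ⟨m, hm⟩ := hn
    have hhalf : n / 2 = m := by omega
    have key : Function.Injective (fun v : Fin m → Bool => c (List.ofFn v)) := by
      intro v w hvw
      simp only at hvw
      have h1 := hc (List.ofFn v) (List.ofFn w) (List.ofFn v).reverse hvw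
      have hlen1 : (List.ofFn v ++ (List.ofFn v).reverse).length = n := by simp [hm]
      have hlen2 : (List.ofFn w ++ (List.ofFn v).reverse).length = n := by simp [hm]
      have hp1 : accept (List.ofFn v ++ (List.ofFn v).reverse) = true := by
        rw [hacc _ hlen1]
        refine ⟨?_, by simp⟩
        rw [hlen1]; exact ⟨m, hm⟩
      have hp2 : accept (List.ofFn w ++ (List.ofFn v).reverse) = true := by
        rw [← h1]; exact hp1
      rw [hacc _ hlen2] at hp2
      have hrev := hp2.2
      rw [List.reverse_append, List.reverse_reverse] at hrev
      have heq : List.ofFn v = List.ofFn w :=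
        (List.append_inj hrev (by simp)).1
      exact List.ofFn_injective heq
    have hcard := Fintype.card_le_of_injective _ key
    simp only [Fintype.card_fun, Fintype.card_fin, Fintype.card_bool, Fintype.card_prod] at hcard
    rw [hhalf]
    exact le_trans hcard (le_of_eq rfl)
  refine ⟨part1, ?_⟩
  rintro A ⟨C, d, hA⟩ ⟨Q, _, c, accept, hc, hacc⟩
  obtain ⟨m, hmlt⟩ := exists_poly_lt_two_pow (Fintype.card Q * (C * 2 ^ d + 1)) d
  have heven : Even (2 * m) := ⟨m, by ring⟩
  have h1 := part1 Q (2 * m) (A (2 * m)) heven (c (2 * m)) (accept (2 * m))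
    (hc (2 * m)) (hacc (2 * m) heven)
  have hhalf : (2 * m) / 2 = m := by omega
  rw [hhalf] at h1
  have hAb : A (2 * m) ≤ C * (2 * m) ^ d := hA (2 * m)
  have hpow : (2 * m) ^ d = 2 ^ d * m ^ d := by rw [mul_pow]
  have h2 : A (2 * m) + 1 ≤ C * 2 ^ d * m ^ d + 1 := by
    have : A (2 * m) ≤ C * 2 ^ d * m ^ d := by
      calc A (2 * m) ≤ C * (2 * m) ^ d := hAb
      _ = C * 2 ^ d * m ^ d := by rw [hpow, mul_assoc]
    omega
  have h3 : 2 ^ m ≤ Fintype.card Q * (C * 2 ^ d * m ^ d + 1) :=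
    h1.trans (Nat.mul_le_mul_left _ h2)
  nlinarith [h3, hmlt, Nat.zero_le (Fintype.card Q * m ^ d),
    Nat.zero_le (Fintype.card Q * (C * 2 ^ d))]
end
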